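/- Let 1 ≤ k ≤ n and let c be a character with $ ≤ c such that no position p > k has BWT[p] = c. (i) If no character strictly greater than c occurs in T, then no suffix of T is strictly greater than the string c · T[SA[k]..n]. (ii) Otherwise, let c' be the smallest character strictly greater than c that occurs in T, and let p be the smallest position with BWT[p] = c'; then such p exists, SA[p] > 1, and T[SA[p]−1..n] is the lexicographically smallest suffix of T that is strictly greater than c · T[SA[k]..n]. -/

import Mathlib

/-!
An occurrence `T[q] = a` with `q < n` shows up in the BWT at the rank of the suffix `T[q+1..n]`,
and ranks order suffixes. As `c` does not occur in the BWT after rank `k`, every suffix `c · U`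
of `T` has `U ≤ T[SA[k]..n]`; hence a suffix exceeding `c · T[SA[k]..n]` begins with some
`d > c`, so with `d ≥ c'`. Among the suffixes beginning with `c'`, the least is
`c' · T[SA[p]..n]` for the first rank `p` carrying `c'` in the BWT.
-/

variable {α : Type*} [LinearOrder α]

/-- The suffix `T[p..n]` of a 1-indexed string `T[1..n]`, as a list. -/
def sfx (T : ℕ → α) (n p : ℕ) : List α :=
  (List.range (n + 1 - p)).map (fun d => T (p + d))

/-- The Burrows–Wheeler transform determined by the text `T`, its suffix array `SA`,
and the end-of-string character `dollar`:  `BWT[i] = T[SA[i]-1]` if `SA[i] > 1`,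
and `BWT[i] = $` if `SA[i] = 1`. -/
def bwt (T : ℕ → α) (SA : ℕ → ℕ) (dollar : α) (i : ℕ) : α :=
  if SA i = 1 then dollar else T (SA i - 1)

section Basic

variable {β : Type*} {T : ℕ → β} {SA : ℕ → ℕ} {dollar : β} {n : ℕ}

theorem sfx_eq_cons {p : ℕ} (h : p ≤ n) : sfx T n p = T p :: sfx T n (p + 1) := by
  rw [sfx, sfx, show n + 1 - p = n - p + 1 by omega, List.range_succ_eq_map]
  simp [show n + 1 - (p + 1) = n - p by omega, Nat.add_assoc, Nat.add_comm 1]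

theorem sfx_eq_nil {p : ℕ} (h : n < p) : sfx T n p = [] := by
  simp [sfx, show n + 1 - p = 0 by omega]

theorem bwt_of_ne_one {i : ℕ} (h : SA i ≠ 1) :
    bwt T SA dollar i = T (SA i - 1) :=
  if_neg h

theorem sfx_pred_SA_eq_cons_bwt {i : ℕ} (h1 : 1 < SA i) (hn : SA i ≤ n) :
    sfx T n (SA i - 1) = bwt T SA dollar i :: sfx T n (SA i) := by
  rw [sfx_eq_cons (by omega), Nat.sub_add_cancel h1.le, bwt_of_ne_one h1.ne']

theorem exists_bwt_eq_of_lt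
    (hSAsurj : ∀ p, 1 ≤ p → p ≤ n → ∃ i, 1 ≤ i ∧ i ≤ n ∧ SA i = p)
    {q : ℕ} (hq : 1 ≤ q) (hqn : q < n) :
    ∃ j, 1 ≤ j ∧ j ≤ n ∧ SA j = q + 1 ∧ bwt T SA dollar j = T q := by
  obtain ⟨j, hj1, hjn, hSAj⟩ := hSAsurj (q + 1) (by omega) hqn
  refine ⟨j, hj1, hjn, hSAj, ?_⟩
  rw [bwt_of_ne_one (by omega), hSAj, Nat.add_sub_cancel]

theorem exists_first_bwt_eq
    (hSAsurj : ∀ p, 1 ≤ p → p ≤ n → ∃ i, 1 ≤ i ∧ i ≤ n ∧ SA i = p)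
    {a : β} {q : ℕ} (hq : 1 ≤ q) (hqn : q < n) (hTq : T q = a) :
    ∃ p, (1 ≤ p ∧ p ≤ n ∧ bwt T SA dollar p = a) ∧
      ∀ j, 1 ≤ j → j ≤ n → bwt T SA dollar j = a → p ≤ j := by
  classical
  have hex : ∃ p, 1 ≤ p ∧ p ≤ n ∧ bwt T SA dollar p = a := by
    obtain ⟨j, hj1, hjn, -, hbwt⟩ := exists_bwt_eq_of_lt (dollar := dollar) hSAsurj hq hqn
    exact ⟨j, hj1, hjn, hbwt.trans hTq⟩
  exact ⟨Nat.find hex, Nat.find_spec hex,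
    fun j hj hjn hbwt => Nat.find_min' hex ⟨hj, hjn, hbwt⟩⟩

end Basic

section SuffixArray

variable {T : ℕ → α} {SA : ℕ → ℕ} {dollar : α} {n : ℕ}

theorem sfx_SA_mono
    (hSAmono : ∀ i j, 1 ≤ i → i < j → j ≤ n → sfx T n (SA i) < sfx T n (SA j))
    {i j : ℕ} (hi : 1 ≤ i) (hij : i ≤ j) (hj : j ≤ n) :
    sfx T n (SA i) ≤ sfx T n (SA j) := by
  rcases hij.lt_or_eq with hlt | rfl
  · exact (hSAmono i j hi hlt hj).le
  · exact le_rfl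

theorem sfx_succ_le_of_bwt_ne
    (hSAsurj : ∀ p, 1 ≤ p → p ≤ n → ∃ i, 1 ≤ i ∧ i ≤ n ∧ SA i = p)
    (hSAmono : ∀ i j, 1 ≤ i → i < j → j ≤ n → sfx T n (SA i) < sfx T n (SA j))
    {k : ℕ} (hk : k ≤ n) {c : α} (hnoc : ∀ p, k < p → p ≤ n → bwt T SA dollar p ≠ c)
    {q : ℕ} (hq : 1 ≤ q) (hqn : q ≤ n) (hTq : T q = c) :
    sfx T n (q + 1) ≤ sfx T n (SA k) := by
  rcases hqn.lt_or_eq with hqn | rfl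
  · obtain ⟨j, hj1, hjn, hSAj, hbwt⟩ := exists_bwt_eq_of_lt (dollar := dollar) hSAsurj hq hqn
    have hjk : j ≤ k := not_lt.mp fun hkj => hnoc j hkj hjn (hbwt.trans hTq)
    exact hSAj ▸ sfx_SA_mono hSAmono hj1 hjk hk
  · rw [sfx_eq_nil (Nat.lt_succ_self q)]
    exact not_lt.mp (List.not_lt_nil _)

theorem lt_head_of_cons_lt_sfx
    (hSAsurj : ∀ p, 1 ≤ p → p ≤ n → ∃ i, 1 ≤ i ∧ i ≤ n ∧ SA i = p)
    (hSAmono : ∀ i j, 1 ≤ i → i < j → j ≤ n → sfx T n (SA i) < sfx T n (SA j))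
    {k : ℕ} (hk : k ≤ n) {c : α} (hnoc : ∀ p, k < p → p ≤ n → bwt T SA dollar p ≠ c)
    {q : ℕ} (hq : 1 ≤ q) (hqn : q ≤ n) (hlt : c :: sfx T n (SA k) < sfx T n q) : c < T q := by
  rw [sfx_eq_cons hqn, List.cons_lt_cons_iff] at hlt
  refine hlt.resolve_right fun ⟨hcq, htail⟩ => ?_
  exact not_le.mpr htail (sfx_succ_le_of_bwt_ne hSAsurj hSAmono hk hnoc hq hqn hcq.symm)

theorem sfx_pred_SA_le_of_bwt_first
    (hSAsurj : ∀ p, 1 ≤ p → p ≤ n → ∃ i, 1 ≤ i ∧ i ≤ n ∧ SA i = p)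
    (hSAmono : ∀ i j, 1 ≤ i → i < j → j ≤ n → sfx T n (SA i) < sfx T n (SA j))
    {a : α} (hTn : T n ≠ a) {p : ℕ} (hp : 1 ≤ p) (hSAp : 1 < SA p) (hSApn : SA p ≤ n)
    (hbwtp : bwt T SA dollar p = a)
    (hfirst : ∀ j, 1 ≤ j → j ≤ n → bwt T SA dollar j = a → p ≤ j)
    {q : ℕ} (hq : 1 ≤ q) (hqn : q ≤ n) (haq : a ≤ T q) :
    sfx T n (SA p - 1) ≤ sfx T n q := by
  rw [sfx_pred_SA_eq_cons_bwt hSAp hSApn, hbwtp, sfx_eq_cons hqn]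
  rcases haq.lt_or_eq with hlt | rfl
  · exact (List.cons_lt_cons_iff.mpr (.inl hlt)).le
  · have hqn : q < n := hqn.lt_of_ne (by rintro rfl; exact hTn rfl)
    obtain ⟨j, hj1, hjn, hSAj, hbwt⟩ := exists_bwt_eq_of_lt (dollar := dollar) hSAsurj hq hqn
    exact List.cons_le_cons _ (hSAj ▸ sfx_SA_mono hSAmono hp (hfirst j hj1 hjn hbwt) hjn)

end SuffixArray

theorem statement2_general
    (n : ℕ) (T : ℕ → α) (dollar : α) (SA : ℕ → ℕ)
    -- `T[1..n]` is a string of length `n ≥ 1` ending with `$`,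
    -- which is smaller than every other character and occurs only at position `n`
    (hTn : T n = dollar)
    -- `SA` is a permutation of `{1,...,n}` sorting the suffixes lexicographically
    (hSAran : ∀ i, 1 ≤ i → i ≤ n → 1 ≤ SA i ∧ SA i ≤ n)
    (hSAsurj : ∀ p, 1 ≤ p → p ≤ n → ∃ i, 1 ≤ i ∧ i ≤ n ∧ SA i = p)
    (hSAmono : ∀ i j, 1 ≤ i → i < j → j ≤ n → sfx T n (SA i) < sfx T n (SA j))
    (k : ℕ) (hk2 : k ≤ n)
    (c : α) (hc : dollar ≤ c)
    (hnoc : ∀ p, k < p → p ≤ n → bwt T SA dollar p ≠ c) :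
    -- (i)
    ((¬ ∃ d, c < d ∧ ∃ q, 1 ≤ q ∧ q ≤ n ∧ T q = d) →
      ∀ q, 1 ≤ q → q ≤ n → ¬ c :: sfx T n (SA k) < sfx T n q) ∧
    -- (ii)
    (∀ c', c < c' → (∃ q, 1 ≤ q ∧ q ≤ n ∧ T q = c') →
      (∀ d, c < d → (∃ q, 1 ≤ q ∧ q ≤ n ∧ T q = d) → c' ≤ d) →
      ∃ p, 1 ≤ p ∧ p ≤ n ∧ bwt T SA dollar p = c' ∧
        (∀ q, 1 ≤ q → q ≤ n → bwt T SA dollar q = c' → p ≤ q) ∧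
        1 < SA p ∧
        c :: sfx T n (SA k) < sfx T n (SA p - 1) ∧
        ∀ q, 1 ≤ q → q ≤ n → c :: sfx T n (SA k) < sfx T n q →
          sfx T n (SA p - 1) ≤ sfx T n q) := by
  have head_gt : ∀ q, 1 ≤ q → q ≤ n → c :: sfx T n (SA k) < sfx T n q → c < T q :=
    fun q hq hqn hlt => lt_head_of_cons_lt_sfx hSAsurj hSAmono hk2 hnoc hq hqn hlt
  refine ⟨fun hno q hq hqn hlt => hno ⟨T q, head_gt q hq hqn hlt, q, hq, hqn, rfl⟩, ?_⟩
  intro c' hcc' ⟨q₀, hq₀, hq₀n, hTq₀⟩ hmin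
  have hc' : dollar ≠ c' := (hc.trans_lt hcc').ne
  have hq₀n : q₀ < n := hq₀n.lt_of_ne (by rintro rfl; exact hc' (hTn.symm.trans hTq₀))
  obtain ⟨p, ⟨hp, hpn, hbwtp⟩, hfirst⟩ :=
    exists_first_bwt_eq (dollar := dollar) hSAsurj hq₀ hq₀n hTq₀
  obtain ⟨hSAp1, hSApn⟩ := hSAran p hp hpn
  have hSAp : 1 < SA p := hSAp1.lt_of_ne fun h => hc' (by rw [← hbwtp, bwt, if_pos h.symm])
  refine ⟨p, hp, hpn, hbwtp, hfirst, hSAp, ?_, fun q hq hqn hlt => ?_⟩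
  · rw [sfx_pred_SA_eq_cons_bwt hSAp hSApn, hbwtp]
    exact List.cons_lt_cons_iff.mpr (.inl hcc')
  · exact sfx_pred_SA_le_of_bwt_first hSAsurj hSAmono (hTn.trans_ne hc') hp hSAp hSApn hbwtp
      hfirst hq hqn (hmin _ (head_gt q hq hqn hlt) ⟨q, hq, hqn, rfl⟩)

/-- Suppose `$ ≤ c` and no position `p > k` has `BWT[p] = c`.
(i) If no character strictly greater than `c` occurs in `T`, then no suffix of `T`
is strictly greater than `c · T[SA[k]..n]`.  (ii) Otherwise, letting `c'` be the
smallest character strictly greater than `c` occurring in `T`, the smallest position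
`p` with `BWT[p] = c'` exists, satisfies `SA[p] > 1`, and `T[SA[p]-1..n]` is the
lexicographically smallest suffix of `T` strictly greater than `c · T[SA[k]..n]`. -/
theorem statement2
    (n : ℕ) (T : ℕ → α) (dollar : α) (SA : ℕ → ℕ)
    -- `T[1..n]` is a string of length `n ≥ 1` ending with `$`,
    -- which is smaller than every other character and occurs only at position `n`
    (hn : 1 ≤ n) (hTn : T n = dollar)
    (hdollar : ∀ p, 1 ≤ p → p < n → dollar < T p)
    -- `SA` is a permutation of `{1,...,n}` sorting the suffixes lexicographically
    (hSAran : ∀ i, 1 ≤ i → i ≤ n → 1 ≤ SA i ∧ SA i ≤ n)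
    (hSAsurj : ∀ p, 1 ≤ p → p ≤ n → ∃ i, 1 ≤ i ∧ i ≤ n ∧ SA i = p)
    (hSAmono : ∀ i j, 1 ≤ i → i < j → j ≤ n → sfx T n (SA i) < sfx T n (SA j))
    (k : ℕ) (hk1 : 1 ≤ k) (hk2 : k ≤ n)
    (c : α) (hc : dollar ≤ c)
    (hnoc : ∀ p, k < p → p ≤ n → bwt T SA dollar p ≠ c) :
    -- (i)
    ((¬ ∃ d, c < d ∧ ∃ q, 1 ≤ q ∧ q ≤ n ∧ T q = d) →
      ∀ q, 1 ≤ q → q ≤ n → ¬ c :: sfx T n (SA k) < sfx T n q) ∧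
    -- (ii)
    (∀ c', c < c' → (∃ q, 1 ≤ q ∧ q ≤ n ∧ T q = c') →
      (∀ d, c < d → (∃ q, 1 ≤ q ∧ q ≤ n ∧ T q = d) → c' ≤ d) →
      ∃ p, 1 ≤ p ∧ p ≤ n ∧ bwt T SA dollar p = c' ∧
        (∀ q, 1 ≤ q → q ≤ n → bwt T SA dollar q = c' → p ≤ q) ∧
        1 < SA p ∧
        c :: sfx T n (SA k) < sfx T n (SA p - 1) ∧
        ∀ q, 1 ≤ q → q ≤ n → c :: sfx T n (SA k) < sfx T n q →
          sfx T n (SA p - 1) ≤ sfx T n q) :=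
  statement2_general n T dollar SA hTn hSAran hSAsurj hSAmono k hk2 c hc hnoc
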